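/- arXiv:2101.02087 — 5 statements merged into one kernel-verified Lean document; each statement's English description precedes it below -/
import Mathlib

section
/- Let x ∈ P, let v be a minimizer of z ↦ ∇f(x)·z over P, and let v′ be a minimizer of z ↦ ∇f(x)·z over P′. Then for every z′ ∈ P′ one has f(x) − ∇f(x)·(x − v) + ∇f(x)·(v′ − v) ≤ f(z′); that is, f(x) − ∇f(x)·(x − v) + ∇f(x)·(v′ − v) ≤ min_{z ∈ P′} f(z). -/
open scoped RealInnerProductSpace

theorem ConvexOn.apply_sub_le_of_hasFDerivAt {E : Type*} [NormedAddCommGroup E]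
    [NormedSpace ℝ E] {s : Set E} {f : E → ℝ} {f' : E →L[ℝ] ℝ} {x y : E}
    (hf : ConvexOn ℝ s f) (hx : x ∈ s) (hy : y ∈ s) (hf' : HasFDerivAt f f' x) :
    f' (y - x) ≤ f y - f x := by
  set ℓ : ℝ →ᵃ[ℝ] E := AffineMap.lineMap x y
  have hℓ : HasDerivAt (f ∘ ℓ) (f' (y - x)) 0 := by
    have hf'ℓ : HasFDerivAt f f' (ℓ 0) := by simpa [ℓ] using hf'
    exact hf'ℓ.comp_hasDerivAt 0 AffineMap.hasDerivAt_lineMap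
  have hslope := (hf.comp_affineMap ℓ).le_slope_of_hasDerivAt
    (by simpa [ℓ] using hx) (by simpa [ℓ] using hy) zero_lt_one hℓ
  simpa [slope_def_field, ℓ] using hslope

theorem ConvexOn.inner_sub_le_of_hasGradientAt {E : Type*} [NormedAddCommGroup E]
    [InnerProductSpace ℝ E] [CompleteSpace E] {s : Set E} {f : E → ℝ} {g x y : E}
    (hf : ConvexOn ℝ s f) (hx : x ∈ s) (hy : y ∈ s) (hg : HasGradientAt f g x) :
    ⟪g, y - x⟫ ≤ f y - f x :=
  hf.apply_sub_le_of_hasFDerivAt hx hy (hasGradientAt_iff_hasFDerivAt.mp hg)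

theorem stmt_2_general {n : ℕ}
    (P P' : Set (EuclideanSpace ℝ (Fin n)))
    (D : Set (EuclideanSpace ℝ (Fin n)))
    (hPD : P ⊆ D) (hP'D : P' ⊆ D)
    (f : EuclideanSpace ℝ (Fin n) → ℝ)
    (g : EuclideanSpace ℝ (Fin n) → EuclideanSpace ℝ (Fin n))
    (hconv : ConvexOn ℝ D f)
    (hgrad : ∀ y ∈ D, HasGradientAt f (g y) y)
    (x : EuclideanSpace ℝ (Fin n)) (hx : x ∈ P)
    (v : EuclideanSpace ℝ (Fin n))
    (v' : EuclideanSpace ℝ (Fin n))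
    (hv'min : ∀ z ∈ P', ⟪g x, v'⟫ ≤ ⟪g x, z⟫) :
    ∀ z' ∈ P', f x - ⟪g x, x - v⟫ + ⟪g x, v' - v⟫ ≤ f z' := by
  intro z' hz'
  have hxD : x ∈ D := hPD hx
  have htangent := hconv.inner_sub_le_of_hasGradientAt hxD (hP'D hz') (hgrad x hxD)
  calc f x - ⟪g x, x - v⟫ + ⟪g x, v' - v⟫ = f x + ⟪g x, v' - x⟫ := by
        simp only [inner_sub_right]; ring
    _ ≤ f x + ⟪g x, z' - x⟫ := by
        simp only [inner_sub_right]; linarith [hv'min z' hz']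
    _ ≤ f z' := by linarith

/-- For `x ∈ P`, `v` a Frank–Wolfe vertex at `x` over `P = {z : Az ≤ b}`
and `v′` a Frank–Wolfe vertex at `x` over `P′ = {z : Az ≤ b′}`, every `z′ ∈ P′`
satisfies `f(x) − ∇f(x)·(x − v) + ∇f(x)·(v′ − v) ≤ f(z′)`. -/
theorem stmt_2 {n m : ℕ}
    (A : Matrix (Fin m) (Fin n) ℝ) (b b' : Fin m → ℝ)
    (P P' : Set (EuclideanSpace ℝ (Fin n)))
    (hP : P = {z : EuclideanSpace ℝ (Fin n) | ∀ i, (∑ j, A i j * z j) ≤ b i})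
    (hP' : P' = {z : EuclideanSpace ℝ (Fin n) | ∀ i, (∑ j, A i j * z j) ≤ b' i})
    (hPne : P.Nonempty) (hPcpt : IsCompact P)
    (hP'ne : P'.Nonempty) (hP'cpt : IsCompact P')
    (D : Set (EuclideanSpace ℝ (Fin n)))
    (hDopen : IsOpen D) (hDconv : Convex ℝ D) (hPD : P ⊆ D) (hP'D : P' ⊆ D)
    (f : EuclideanSpace ℝ (Fin n) → ℝ)
    (g : EuclideanSpace ℝ (Fin n) → EuclideanSpace ℝ (Fin n))
    (hconv : ConvexOn ℝ D f)
    (hgrad : ∀ y ∈ D, HasGradientAt f (g y) y)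
    (x : EuclideanSpace ℝ (Fin n)) (hx : x ∈ P)
    (v : EuclideanSpace ℝ (Fin n)) (hv : v ∈ P)
    (hvmin : ∀ z ∈ P, ⟪g x, v⟫ ≤ ⟪g x, z⟫)
    (v' : EuclideanSpace ℝ (Fin n)) (hv' : v' ∈ P')
    (hv'min : ∀ z ∈ P', ⟪g x, v'⟫ ≤ ⟪g x, z⟫) :
    ∀ z' ∈ P', f x - ⟪g x, x - v⟫ + ⟪g x, v' - v⟫ ≤ f z' :=
  stmt_2_general P P' D hPD hP'D f g hconv hgrad x hx v v' hv'min
end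

section
/- Let x ∈ P, let v be a minimizer of z ↦ ∇f(x)·z over P and v′ a minimizer of z ↦ ∇f(x)·z over P′, and suppose λ ∈ ℝ^m is a common dual solution for v in P and for v′ in P′ (λ ≥ 0, ∇f(x) = −λᵀA, ∇f(x)·v = −λ·b, ∇f(x)·v′ = −λ·b′). Then f(x) − ∇f(x)·(x − v) + λ·(b − b′) ≤ min_{z ∈ P′} f(z). -/
open scoped RealInnerProductSpace BigOperators

/-! The gradient inequality `f z' ≥ f x + ⟪∇f(x), z' - x⟫` together with the minimality of `v'`
gives `f z' ≥ f x - ⟪∇f(x), x⟫ + ⟪∇f(x), v'⟫`, and the two complementary slackness identities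
rewrite `⟪∇f(x), v'⟫ - ⟪∇f(x), v⟫` as `λ·(b - b')`. -/

theorem ConvexOn.add_inner_sub_le_of_hasGradientAt {E : Type*} [NormedAddCommGroup E]
    [InnerProductSpace ℝ E] [CompleteSpace E] {D : Set E} {f : E → ℝ} {G x y : E}
    (hf : ConvexOn ℝ D f) (hx : x ∈ D) (hy : y ∈ D) (hG : HasGradientAt f G x) :
    f x + ⟪G, y - x⟫ ≤ f y := by
  set γ := AffineMap.lineMap (k := ℝ) x y
  have hγ : HasDerivAt γ (y - x) 0 := by
    simpa [γ] using AffineMap.hasDerivAt_lineMap (a := x) (b := y) (x := (0 : ℝ))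
  have hderiv : HasDerivAt (f ∘ γ) ⟪G, y - x⟫ 0 := by
    have hG0 : HasGradientAt f G (γ 0) := by simpa [γ] using hG
    simpa using hG0.hasFDerivAt.comp_hasDerivAt 0 hγ
  have hslope := (hf.comp_affineMap γ).le_slope_of_hasDerivAt (x := 0) (y := 1)
    (by simpa [γ] using hx) (by simpa [γ] using hy) one_pos hderiv
  simp only [slope_def_field, Function.comp_apply, sub_zero, div_one] at hslope
  simp only [γ, AffineMap.lineMap_apply_zero, AffineMap.lineMap_apply_one] at hslope
  linarith

theorem stmt_5_general {n m : ℕ}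
    (b b' : Fin m → ℝ)
    (P P' : Set (EuclideanSpace ℝ (Fin n)))
    (D : Set (EuclideanSpace ℝ (Fin n)))
    (hPD : P ⊆ D) (hP'D : P' ⊆ D)
    (f : EuclideanSpace ℝ (Fin n) → ℝ)
    (g : EuclideanSpace ℝ (Fin n) → EuclideanSpace ℝ (Fin n))
    (hconv : ConvexOn ℝ D f)
    (hgrad : ∀ y ∈ D, HasGradientAt f (g y) y)
    (x : EuclideanSpace ℝ (Fin n)) (hx : x ∈ P)
    (v : EuclideanSpace ℝ (Fin n))
    (v' : EuclideanSpace ℝ (Fin n))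
    (hv'min : ∀ z ∈ P', ⟪g x, v'⟫ ≤ ⟪g x, z⟫)
    (lam : Fin m → ℝ)
    (hcompl : ⟪g x, v⟫ = -(∑ i, lam i * b i))
    (hcompl' : ⟪g x, v'⟫ = -(∑ i, lam i * b' i)) :
    ∀ z' ∈ P', f x - ⟪g x, x - v⟫ + (∑ i, lam i * (b i - b' i)) ≤ f z' := by
  intro z' hz'
  have hgradient_ineq :=
    hconv.add_inner_sub_le_of_hasGradientAt (hPD hx) (hP'D hz') (hgrad x (hPD hx))
  have hdual_gap : ∑ i, lam i * (b i - b' i) = ⟪g x, v'⟫ - ⟪g x, v⟫ := by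
    simp only [mul_sub, Finset.sum_sub_distrib, hcompl, hcompl']
    ring
  rw [inner_sub_right] at hgradient_ineq ⊢
  linarith [hv'min z' hz']

/-- With `v`, `v′` Frank–Wolfe vertices at `x` over `P` resp. `P′`
and `λ` a common dual solution for `v` in `P` and `v′` in `P′`,
`f(x) − ∇f(x)·(x − v) + λ·(b − b′) ≤ min_{z ∈ P′} f(z)`. -/
theorem stmt_5 {n m : ℕ}
    (A : Matrix (Fin m) (Fin n) ℝ) (b b' : Fin m → ℝ)
    (P P' : Set (EuclideanSpace ℝ (Fin n)))
    (hP : P = {z : EuclideanSpace ℝ (Fin n) | ∀ i, (∑ j, A i j * z j) ≤ b i})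
    (hP' : P' = {z : EuclideanSpace ℝ (Fin n) | ∀ i, (∑ j, A i j * z j) ≤ b' i})
    (hPne : P.Nonempty) (hPcpt : IsCompact P)
    (hP'ne : P'.Nonempty) (hP'cpt : IsCompact P')
    (D : Set (EuclideanSpace ℝ (Fin n)))
    (hDopen : IsOpen D) (hDconv : Convex ℝ D) (hPD : P ⊆ D) (hP'D : P' ⊆ D)
    (f : EuclideanSpace ℝ (Fin n) → ℝ)
    (g : EuclideanSpace ℝ (Fin n) → EuclideanSpace ℝ (Fin n))
    (hconv : ConvexOn ℝ D f)
    (hgrad : ∀ y ∈ D, HasGradientAt f (g y) y)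
    (x : EuclideanSpace ℝ (Fin n)) (hx : x ∈ P)
    (v : EuclideanSpace ℝ (Fin n)) (hv : v ∈ P)
    (hvmin : ∀ z ∈ P, ⟪g x, v⟫ ≤ ⟪g x, z⟫)
    (v' : EuclideanSpace ℝ (Fin n)) (hv' : v' ∈ P')
    (hv'min : ∀ z ∈ P', ⟪g x, v'⟫ ≤ ⟪g x, z⟫)
    (lam : Fin m → ℝ) (hlam : ∀ i, 0 ≤ lam i)
    (hdual : ∀ j, g x j = -(∑ i, lam i * A i j))
    (hcompl : ⟪g x, v⟫ = -(∑ i, lam i * b i))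
    (hcompl' : ⟪g x, v'⟫ = -(∑ i, lam i * b' i)) :
    ∀ z' ∈ P', f x - ⟪g x, x - v⟫ + (∑ i, lam i * (b i - b' i)) ≤ f z' :=
  stmt_5_general b b' P P' D hPD hP'D f g hconv hgrad x hx v v' hv'min lam hcompl hcompl'
end

section
/- Let x ∈ P, let v be a minimizer of z ↦ ∇f(x)·z over P and v′ a minimizer of z ↦ ∇f(x)·z over P′, set x′ := x − v + v′ and assume x′ ∈ P′. Suppose f is L-smooth and λ ∈ ℝ^m is a common dual solution for v in P and for v′ in P′ (λ ≥ 0, ∇f(x) = −λᵀA, ∇f(x)·v = −λ·b, ∇f(x)·v′ = −λ·b′). Then min_{z ∈ P′} f(z) ≤ f(x′) ≤ f(x) + λ·(b − b′) + (L/2)‖v′ − v‖². -/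
open scoped RealInnerProductSpace BigOperators

/-- With `v`, `v′` Frank–Wolfe vertices at `x` over `P` resp. `P′`,
`x′ := x − v + v′ ∈ P′`, `f` L-smooth, and `λ` a common dual solution for `v`
in `P` and `v′` in `P′`, we have
`min_{z ∈ P′} f(z) ≤ f(x′) ≤ f(x) + λ·(b − b′) + (L/2)‖v′ − v‖²`. -/
theorem stmt_6 {n m : ℕ}
    (A : Matrix (Fin m) (Fin n) ℝ) (b b' : Fin m → ℝ)
    (P P' : Set (EuclideanSpace ℝ (Fin n)))
    (hP : P = {z : EuclideanSpace ℝ (Fin n) | ∀ i, (∑ j, A i j * z j) ≤ b i})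
    (hP' : P' = {z : EuclideanSpace ℝ (Fin n) | ∀ i, (∑ j, A i j * z j) ≤ b' i})
    (hPne : P.Nonempty) (hPcpt : IsCompact P)
    (hP'ne : P'.Nonempty) (hP'cpt : IsCompact P')
    (D : Set (EuclideanSpace ℝ (Fin n)))
    (hDopen : IsOpen D) (hDconv : Convex ℝ D) (hPD : P ⊆ D) (hP'D : P' ⊆ D)
    (f : EuclideanSpace ℝ (Fin n) → ℝ)
    (g : EuclideanSpace ℝ (Fin n) → EuclideanSpace ℝ (Fin n))
    (hconv : ConvexOn ℝ D f)
    (hgrad : ∀ y ∈ D, HasGradientAt f (g y) y)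
    (L : ℝ)
    (hsmooth : ∀ y ∈ D, ∀ z ∈ D, f z - f y ≤ ⟪g y, z - y⟫ + L / 2 * ‖z - y‖ ^ 2)
    (x : EuclideanSpace ℝ (Fin n)) (hx : x ∈ P)
    (v : EuclideanSpace ℝ (Fin n)) (hv : v ∈ P)
    (hvmin : ∀ z ∈ P, ⟪g x, v⟫ ≤ ⟪g x, z⟫)
    (v' : EuclideanSpace ℝ (Fin n)) (hv' : v' ∈ P')
    (hv'min : ∀ z ∈ P', ⟪g x, v'⟫ ≤ ⟪g x, z⟫)
    (x' : EuclideanSpace ℝ (Fin n)) (hx'def : x' = x - v + v')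
    (hx'mem : x' ∈ P')
    (lam : Fin m → ℝ) (hlam : ∀ i, 0 ≤ lam i)
    (hdual : ∀ j, g x j = -(∑ i, lam i * A i j))
    (hcompl : ⟪g x, v⟫ = -(∑ i, lam i * b i))
    (hcompl' : ⟪g x, v'⟫ = -(∑ i, lam i * b' i)) :
    sInf (f '' P') ≤ f x' ∧
      f x' ≤ f x + (∑ i, lam i * (b i - b' i)) + L / 2 * ‖v' - v‖ ^ 2 := by
  have hcont : ContinuousOn f P' := fun y hy =>
    ((hgrad y (hP'D hy)).continuousAt).continuousWithinAt
  constructor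
  · exact csInf_le (hP'cpt.image_of_continuousOn hcont).bddBelow ⟨x', hx'mem, rfl⟩
  · have h := hsmooth x (hPD hx) x' (hP'D hx'mem)
    have hdiff : x' - x = v' - v := by rw [hx'def]; abel
    rw [hdiff] at h
    have hinner : ⟪g x, v' - v⟫ = ∑ i, lam i * (b i - b' i) := by
      rw [inner_sub_right, hcompl, hcompl']
      simp [mul_sub, Finset.sum_sub_distrib]
      ring
    linarith
end

section
/- (Existence of dual prices / strong LP duality.) Let c ∈ ℝⁿ and suppose P = {z ∈ ℝⁿ : Az ≤ b} is nonempty and compact, and let v be a minimizer of z ↦ c·z over P. Then there exists λ ∈ ℝ^m with λ ≥ 0, c = −λᵀA, and c·v = −λ·b. -/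
/-!
At the minimizer `v`, a direction `d` with `⟪a i, d⟫ ≤ 0` for every active constraint
(`⟪a i, v⟫ = b i`) stays feasible for small steps, so `⟪c, d⟫ ≥ 0`. Farkas' lemma then puts `-c`
in the cone generated by the active rows; since the multipliers vanish off the active set,
`⟪c, v⟫ = -∑ λᵢ bᵢ` (complementary slackness).

Farkas' lemma is hyperplane separation applied to a finitely generated cone, which is closed by
the conic Carathéodory theorem: it is the finite union of the cones generated by its linearly
independent subsets of generators, each a linear homeomorphic image of an orthant.
-/

open scoped RealInnerProductSpace BigOperators

theorem Finset.exists_mul_le_of_exists_pos {α : Type*} (s : Finset α) {f g : α → ℝ}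
    (hf : ∀ a ∈ s, 0 ≤ f a) (hg : ∃ a ∈ s, 0 < g a) :
    ∃ r : ℝ, (∀ a ∈ s, r * g a ≤ f a) ∧ ∃ a ∈ s, r * g a = f a := by
  obtain ⟨a₀, ha₀, hmin⟩ := {a ∈ s | 0 < g a}.exists_min_image (fun a => f a / g a)
    (by simpa [Finset.Nonempty] using hg)
  rw [Finset.mem_filter] at ha₀
  refine ⟨f a₀ / g a₀, fun a ha => ?_, a₀, ha₀.1, div_mul_cancel₀ _ ha₀.2.ne'⟩
  rcases lt_or_ge 0 (g a) with hga | hga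
  · exact (le_div_iff₀ hga).mp (hmin a (Finset.mem_filter.mpr ⟨ha, hga⟩))
  · exact (mul_nonpos_of_nonneg_of_nonpos (div_nonneg (hf a₀ ha₀.1) ha₀.2.le) hga).trans
      (hf a ha)

namespace PointedCone

section Hull

variable {E : Type*} [AddCommGroup E] [Module ℝ E]

theorem mem_hull_finset_iff {s : Finset E} {x : E} :
    x ∈ hull ℝ (s : Set E) ↔ ∃ f : E → ℝ, (∀ y ∈ s, 0 ≤ f y) ∧ ∑ y ∈ s, f y • y = x := by
  refine ⟨fun hx => ?_, ?_⟩
  · obtain ⟨f, -, rfl⟩ := Submodule.mem_span_finset.mp hx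
    exact ⟨fun y => f y, fun y _ => (f y).2, rfl⟩
  · rintro ⟨f, hf, rfl⟩
    exact Submodule.sum_mem _ fun y hy => (hull ℝ _).smul_mem (hf y hy) (subset_hull hy)

theorem exists_mem_hull_erase_of_not_linearIndepOn [DecidableEq E] {s : Finset E}
    (hs : ¬LinearIndepOn ℝ id (s : Set E)) {x : E} (hx : x ∈ hull ℝ (s : Set E)) :
    ∃ y ∈ s, x ∈ hull ℝ (s.erase y : Set E) := by
  obtain ⟨f, hf, rfl⟩ := mem_hull_finset_iff.mp hx
  obtain ⟨g, hg, hgpos⟩ : ∃ g : E → ℝ, ∑ y ∈ s, g y • y = 0 ∧ ∃ y ∈ s, 0 < g y := by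
    obtain ⟨g, hg, y, hy, hgy⟩ := not_linearIndepOn_finset_iff.mp hs
    rcases hgy.lt_or_gt with hneg | hpos
    · exact ⟨-g, by simpa [neg_smul] using hg, y, hy, neg_pos.mpr hneg⟩
    · exact ⟨g, hg, y, hy, hpos⟩
  obtain ⟨r, hle, y, hy, hfg⟩ := s.exists_mul_le_of_exists_pos hf hgpos
  refine ⟨y, hy, mem_hull_finset_iff.mpr ⟨fun z => f z - r * g z, fun z hz => ?_, ?_⟩⟩
  · exact sub_nonneg.mpr (hle z (Finset.mem_of_mem_erase hz))
  · rw [Finset.sum_erase _ (by simp [hfg])]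
    simp only [sub_smul, mul_smul, Finset.sum_sub_distrib, ← Finset.smul_sum, hg, smul_zero,
      sub_zero]

theorem exists_linearIndepOn_of_mem_hull [DecidableEq E] (s : Finset E) {x : E}
    (hx : x ∈ hull ℝ (s : Set E)) :
    ∃ t ⊆ s, LinearIndepOn ℝ id (t : Set E) ∧ x ∈ hull ℝ (t : Set E) := by
  induction s using Finset.strongInduction with
  | H s ih =>
    by_cases hs : LinearIndepOn ℝ id (s : Set E)
    · exact ⟨s, subset_rfl, hs, hx⟩
    obtain ⟨y, hy, hxy⟩ := exists_mem_hull_erase_of_not_linearIndepOn hs hx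
    obtain ⟨t, hts, ht, hxt⟩ := ih _ (Finset.erase_ssubset hy) hxy
    exact ⟨t, hts.trans (s.erase_subset y), ht, hxt⟩

variable [TopologicalSpace E] [IsTopologicalAddGroup E] [ContinuousSMul ℝ E] [T2Space E]

theorem isClosed_hull_of_linearIndepOn {s : Finset E} (hs : LinearIndepOn ℝ id (s : Set E)) :
    IsClosed (hull ℝ (s : Set E) : Set E) := by
  let f := Fintype.linearCombination ℝ (Subtype.val : s → E)
  have hf : Topology.IsClosedEmbedding f := LinearMap.isClosedEmbedding_of_injective
    (LinearMap.ker_eq_bot.mpr (linearIndependent_iff_injective_fintypeLinearCombination.mp hs))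
  have himage : (hull ℝ (s : Set E) : Set E) = f '' Set.Ici 0 := by
    refine Set.Subset.antisymm (fun x hx => ?_) ?_
    · obtain ⟨g, hg, rfl⟩ := mem_hull_finset_iff.mp hx
      refine ⟨fun y => g y, fun y => hg y y.2, ?_⟩
      simp only [f, Fintype.linearCombination_apply]
      exact s.sum_coe_sort fun y => g y • y
    · rintro _ ⟨c, hc, rfl⟩
      exact Submodule.sum_mem _ fun i _ => (hull ℝ _).smul_mem (hc i) (subset_hull i.2)
  rw [himage]
  exact hf.isClosedMap _ isClosed_Ici

theorem isClosed_hull_of_finite {s : Set E} (hs : s.Finite) : IsClosed (hull ℝ s : Set E) := by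
  classical
  lift s to Finset E using hs
  have hunion : (hull ℝ (s : Set E) : Set E) = ⋃ t ∈ {t : Finset E | t ⊆ s ∧
      LinearIndepOn ℝ id (t : Set E)}, (hull ℝ (t : Set E) : Set E) := by
    ext x
    simp only [Set.mem_iUnion, Set.mem_ofPred_eq, SetLike.mem_coe, exists_prop]
    constructor
    · intro hx
      obtain ⟨t, hts, ht, hxt⟩ := exists_linearIndepOn_of_mem_hull s hx
      exact ⟨t, ⟨hts, ht⟩, hxt⟩
    · rintro ⟨t, ⟨hts, -⟩, hxt⟩
      exact Submodule.span_mono (Finset.coe_subset.mpr hts) hxt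
  rw [hunion]
  exact Set.Finite.isClosed_biUnion (s.powerset.finite_toSet.subset fun t ht => by simpa using ht.1)
    fun t ht => isClosed_hull_of_linearIndepOn ht.2

end Hull

theorem mem_hull_of_forall_inner_nonneg {E : Type*} [NormedAddCommGroup E] [InnerProductSpace ℝ E]
    [CompleteSpace E] {s : Set E} (hs : s.Finite) {x : E}
    (h : ∀ d, (∀ y ∈ s, 0 ≤ ⟪y, d⟫) → 0 ≤ ⟪x, d⟫) : x ∈ hull ℝ s := by
  by_contra hx
  obtain ⟨d, hd, hxd⟩ :=
    ProperCone.hyperplane_separation' (C := ⟨hull ℝ s, isClosed_hull_of_finite hs⟩) hx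
  exact hxd.not_ge (h d fun y hy => hd y (subset_hull hy))

end PointedCone

open Filter Topology PointedCone

section LinearProgramming

variable {ι E : Type*} [Fintype ι] [NormedAddCommGroup E] [InnerProductSpace ℝ E]

def polyhedron (a : ι → E) (b : ι → ℝ) : Set E := {z | ∀ i, ⟪a i, z⟫ ≤ b i}

theorem inner_nonneg_of_isMinOn_polyhedron {a : ι → E} {b : ι → ℝ} {c v : E}
    (hv : v ∈ polyhedron a b) (hmin : IsMinOn (⟪c, ·⟫) (polyhedron a b) v) {d : E}
    (hd : ∀ i, ⟪a i, v⟫ = b i → ⟪a i, d⟫ ≤ 0) : 0 ≤ ⟪c, d⟫ := by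
  have hfeasible : ∀ᶠ t in 𝓝[>] (0 : ℝ), v + t • d ∈ polyhedron a b := by
    refine eventually_all.mpr fun i => ?_
    simp only [inner_add_right, real_inner_smul_right]
    rcases (hv i).eq_or_lt with hactive | hslack
    · filter_upwards [self_mem_nhdsWithin] with t (ht : 0 < t)
      nlinarith [hd i hactive]
    · have hlim : Tendsto (fun t : ℝ => ⟪a i, v⟫ + t * ⟪a i, d⟫) (𝓝 0) (𝓝 ⟪a i, v⟫) :=
        (by fun_prop : Continuous fun t : ℝ => ⟪a i, v⟫ + t * ⟪a i, d⟫).tendsto' 0 _ (by simp)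
      exact ((hlim.eventually_lt_const hslack).filter_mono nhdsWithin_le_nhds).mono
        fun _ => le_of_lt
  obtain ⟨t, hmem, ht : 0 < t⟩ := (hfeasible.and self_mem_nhdsWithin).exists
  have hle := isMinOn_iff.mp hmin _ hmem
  rw [inner_add_right, real_inner_smul_right] at hle
  nlinarith

theorem exists_dual_of_isMinOn_polyhedron [CompleteSpace E] {a : ι → E} {b : ι → ℝ} {c v : E}
    (hv : v ∈ polyhedron a b) (hmin : IsMinOn (⟪c, ·⟫) (polyhedron a b) v) :
    ∃ lam : ι → ℝ, (∀ i, 0 ≤ lam i) ∧ ∑ i, lam i • a i = -c ∧ ∑ i, lam i * b i = -⟪c, v⟫ := by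
  set active := {i | ⟪a i, v⟫ = b i}
  have hcone : -c ∈ hull ℝ (a '' active) :=
    mem_hull_of_forall_inner_nonneg (active.toFinite.image a) fun d hd => by
      rw [inner_neg_left, ← inner_neg_right]
      refine inner_nonneg_of_isMinOn_polyhedron hv hmin fun i hi => ?_
      rw [inner_neg_right, neg_nonpos]
      exact hd _ (Set.mem_image_of_mem a hi)
  obtain ⟨l, hl_active, hl⟩ := (Finsupp.mem_span_image_iff_linearCombination _).mp hcone
  have hsum : ∑ i, (l i : ℝ) • a i = -c := by
    rw [← hl, Finsupp.linearCombination_apply, Finsupp.sum_fintype _ _ (by simp)]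
    rfl
  refine ⟨fun i => l i, fun i => (l i).2, hsum, ?_⟩
  calc ∑ i, (l i : ℝ) * b i = ∑ i, (l i : ℝ) * ⟪a i, v⟫ := by
        refine Finset.sum_congr rfl fun i _ => ?_
        by_cases hi : i ∈ active
        · rw [hi]
        · rw [Finsupp.notMem_support_iff.mp fun h => hi (hl_active h)]
          simp
    _ = ⟪∑ i, (l i : ℝ) • a i, v⟫ := by simp only [sum_inner, real_inner_smul_left]
    _ = -⟪c, v⟫ := by rw [hsum, inner_neg_left]

end LinearProgramming

theorem stmt_10_general {n m : ℕ}
    (A : Matrix (Fin m) (Fin n) ℝ) (b : Fin m → ℝ)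
    (P : Set (EuclideanSpace ℝ (Fin n)))
    (hP : P = {z : EuclideanSpace ℝ (Fin n) | ∀ i, (∑ j, A i j * z j) ≤ b i})
    (c : EuclideanSpace ℝ (Fin n))
    (v : EuclideanSpace ℝ (Fin n)) (hv : v ∈ P)
    (hvmin : ∀ z ∈ P, ⟪c, v⟫ ≤ ⟪c, z⟫) :
    ∃ lam : Fin m → ℝ, (∀ i, 0 ≤ lam i) ∧
      (∀ j, c j = -(∑ i, lam i * A i j)) ∧
      ⟪c, v⟫ = -(∑ i, lam i * b i) := by
  let a i : EuclideanSpace ℝ (Fin n) := WithLp.toLp 2 (A i)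
  have hP' : P = polyhedron a b := by
    ext z
    simp [hP, polyhedron, a, PiLp.inner_apply, mul_comm]
  subst hP'
  obtain ⟨lam, hlam, hc, hcv⟩ := exists_dual_of_isMinOn_polyhedron hv (isMinOn_iff.mpr hvmin)
  refine ⟨lam, hlam, fun j => ?_, by linarith⟩
  have hcj : ∑ i, lam i * A i j = -c j := by simpa [a] using congrArg (· j) hc
  linarith

/-- Existence of dual prices / strong LP duality: If
`P = {z : Az ≤ b}` is nonempty and compact and `v` minimizes `z ↦ c·z` over
`P`, then there is `λ ≥ 0` with `c = −λᵀA` and `c·v = −λ·b`. -/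
theorem stmt_10 {n m : ℕ}
    (A : Matrix (Fin m) (Fin n) ℝ) (b : Fin m → ℝ)
    (P : Set (EuclideanSpace ℝ (Fin n)))
    (hP : P = {z : EuclideanSpace ℝ (Fin n) | ∀ i, (∑ j, A i j * z j) ≤ b i})
    (hPne : P.Nonempty) (hPcpt : IsCompact P)
    (c : EuclideanSpace ℝ (Fin n))
    (v : EuclideanSpace ℝ (Fin n)) (hv : v ∈ P)
    (hvmin : ∀ z ∈ P, ⟪c, v⟫ ≤ ⟪c, z⟫) :
    ∃ lam : Fin m → ℝ, (∀ i, 0 ≤ lam i) ∧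
      (∀ j, c j = -(∑ i, lam i * A i j)) ∧
      ⟪c, v⟫ = -(∑ i, lam i * b i) :=
  stmt_10_general A b P hP c v hv hvmin
end

section
/- (Stability of the minimizing face under perturbation of the objective.) Let P ⊆ ℝⁿ be a nonempty compact polytope and c ∈ ℝⁿ. Then there exists ε > 0 such that for every c′ ∈ ℝⁿ with ‖c′ − c‖ < ε, every minimizer of z ↦ c′·z over P is also a minimizer of z ↦ c·z over P. -/
open scoped RealInnerProductSpace BigOperators

private lemma inner_centerMass {n : ℕ} (S : Finset (EuclideanSpace ℝ (Fin n)))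
    (c : EuclideanSpace ℝ (Fin n)) (w : EuclideanSpace ℝ (Fin n) → ℝ)
    (hw : ∑ s ∈ S, w s = 1) :
    ⟪c, S.centerMass w id⟫ = ∑ s ∈ S, w s * ⟪c, s⟫ := by
  rw [Finset.centerMass_eq_of_sum_1 _ _ hw, inner_sum]
  exact Finset.sum_congr rfl (fun s _ => real_inner_smul_right c s (w s))

/-- Stability of the minimizing face under perturbation of the
objective: For a nonempty compact polytope `P` (the convex hull of a finite
set of points) and `c ∈ ℝⁿ`, there is `ε > 0` such that for every `c′` with
`‖c′ − c‖ < ε`, every minimizer of `z ↦ c′·z` over `P` also minimizes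
`z ↦ c·z` over `P`. -/
theorem stmt_13 {n : ℕ}
    (P : Set (EuclideanSpace ℝ (Fin n)))
    (S : Finset (EuclideanSpace ℝ (Fin n)))
    (hP : P = convexHull ℝ (S : Set (EuclideanSpace ℝ (Fin n))))
    (hPne : P.Nonempty) (hPcpt : IsCompact P)
    (c : EuclideanSpace ℝ (Fin n)) :
    ∃ ε > 0, ∀ c' : EuclideanSpace ℝ (Fin n), ‖c' - c‖ < ε →
      ∀ v ∈ P, (∀ z ∈ P, ⟪c', v⟫ ≤ ⟪c', z⟫) → (∀ z ∈ P, ⟪c, v⟫ ≤ ⟪c, z⟫) := by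
  have hS : S.Nonempty := by
    rcases hPne with ⟨x, hx⟩
    rw [hP] at hx
    rcases Finset.eq_empty_or_nonempty S with h | h
    · simp [h] at hx
    · exact h
  set f : EuclideanSpace ℝ (Fin n) → ℝ := fun s => ⟪c, s⟫ with hf
  set m : ℝ := S.inf' hS f with hm
  obtain ⟨t, htS, htm⟩ := S.exists_mem_eq_inf' hS f
  have hmle : ∀ s ∈ S, m ≤ f s := fun s hs => Finset.inf'_le f hs
  -- gap δ
  have hδ : ∃ δ > 0, ∀ s ∈ S, f s < m + δ → f s = m := by
    set U := S.filter (fun s => f s ≠ m) with hU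
    rcases Finset.eq_empty_or_nonempty U with h | h
    · refine ⟨1, one_pos, fun s hs _ => ?_⟩
      by_contra hne
      have : s ∈ U := Finset.mem_filter.2 ⟨hs, hne⟩
      simp [h] at this
    · refine ⟨U.inf' h (fun s => f s - m), ?_, ?_⟩
      · rw [gt_iff_lt, Finset.lt_inf'_iff]
        intro s hs
        rcases Finset.mem_filter.1 hs with ⟨hsS, hne⟩
        have := hmle s hsS
        have : m < f s := lt_of_le_of_ne this (Ne.symm hne)
        linarith
      · intro s hs hlt
        by_contra hne
        have hsU : s ∈ U := Finset.mem_filter.2 ⟨hs, hne⟩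
        have := Finset.inf'_le (fun s => f s - m) hsU
        linarith
  obtain ⟨δ, hδ0, hgap⟩ := hδ
  -- radius bound
  set R : ℝ := S.sup' hS (fun s => ‖s‖) with hR
  have hR0 : 0 ≤ R := le_trans (norm_nonneg t) (Finset.le_sup' _ htS)
  have hball : ∀ z ∈ P, ‖z‖ ≤ R := by
    intro z hz
    rw [hP] at hz
    have hsub : (S : Set (EuclideanSpace ℝ (Fin n))) ⊆ Metric.closedBall 0 R := by
      intro s hs
      rw [Metric.mem_closedBall, dist_zero_right]
      exact Finset.le_sup' _ hs
    have := convexHull_min hsub (convex_closedBall 0 R) hz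
    rwa [Metric.mem_closedBall, dist_zero_right] at this
  have hRlt : (0:ℝ) < 2 * R + 1 := by linarith
  refine ⟨δ / (2 * R + 1), div_pos hδ0 hRlt, ?_⟩
  set ε := δ / (2 * R + 1) with hε
  have hε0 : 0 < ε := div_pos hδ0 hRlt
  have hεR : ε * (2 * R) < δ := by
    have h1 : ε * (2 * R + 1) = δ := div_mul_cancel₀ δ (ne_of_gt hRlt)
    nlinarith
  intro c' hc' v hvP hvmin
  -- perturbation bound
  have hpert : ∀ z ∈ P, |⟪c', z⟫ - ⟪c, z⟫| ≤ ε * R := by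
    intro z hz
    have h1 : ⟪c', z⟫ - ⟪c, z⟫ = ⟪c' - c, z⟫ := by rw [inner_sub_left]
    rw [h1]
    calc |⟪c' - c, z⟫| ≤ ‖c' - c‖ * ‖z‖ := abs_real_inner_le_norm _ _
      _ ≤ ε * R := mul_le_mul (le_of_lt hc') (hball z hz) (norm_nonneg z) (le_of_lt hε0)
  have hSP : ∀ s ∈ S, s ∈ P := by
    intro s hs
    rw [hP]
    exact subset_convexHull ℝ _ hs
  -- representation of v
  have hv' : v ∈ convexHull ℝ (S : Set (EuclideanSpace ℝ (Fin n))) := hP ▸ hvP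
  rw [Finset.convexHull_eq] at hv'
  obtain ⟨w, hw0, hw1, hwc⟩ := hv'
  -- each support vertex is a c'-minimizer among S
  have hvS : ∀ s ∈ S, ⟪c', v⟫ ≤ ⟪c', s⟫ := fun s hs => hvmin s (hSP s hs)
  have hvinner : ⟪c', v⟫ = ∑ s ∈ S, w s * ⟪c', s⟫ := by
    rw [← hwc]; exact inner_centerMass S c' w hw1
  have hsum0 : ∑ s ∈ S, w s * (⟪c', s⟫ - ⟪c', v⟫) = 0 := by
    have : ∑ s ∈ S, w s * (⟪c', s⟫ - ⟪c', v⟫)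
        = (∑ s ∈ S, w s * ⟪c', s⟫) - (∑ s ∈ S, w s) * ⟪c', v⟫ := by
      rw [Finset.sum_mul, ← Finset.sum_sub_distrib]
      congr 1; ext s; ring
    rw [this, hw1, ← hvinner]; ring
  have hsupp : ∀ s ∈ S, w s ≠ 0 → ⟪c', s⟫ = ⟪c', v⟫ := by
    intro s hs hws
    have hterm := (Finset.sum_eq_zero_iff_of_nonneg (fun s hs =>
      mul_nonneg (hw0 s hs) (sub_nonneg.2 (hvS s hs)))).1 hsum0 s hs
    rcases mul_eq_zero.1 hterm with h | h
    · exact absurd h hws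
    · linarith [sub_eq_zero.1 h]
  -- support vertices achieve m for c
  have hsuppm : ∀ s ∈ S, w s ≠ 0 → f s = m := by
    intro s hs hws
    apply hgap s hs
    have h1 : f s ≤ ⟪c', s⟫ + ε * R := by
      have := hpert s (hSP s hs)
      have := abs_le.1 this
      simp only [hf]; linarith [this.1]
    have h2 : ⟪c', v⟫ ≤ ⟪c', t⟫ := hvS t htS
    have h3 : ⟪c', t⟫ ≤ m + ε * R := by
      have ha := abs_le.1 (hpert t (hSP t htS))
      have hb : ⟪c', t⟫ ≤ f t + ε * R := by simp only [hf]; linarith [ha.2]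
      rw [hm, htm]; exact hb
    rw [hsupp s hs hws] at h1
    linarith
  -- value of v
  have hvm : f v = m := by
    have : f v = ∑ s ∈ S, w s * f s := by
      simp only [hf]
      rw [← hwc]; exact inner_centerMass S c w hw1
    rw [this]
    have : ∑ s ∈ S, w s * f s = ∑ s ∈ S, w s * m := by
      apply Finset.sum_congr rfl
      intro s hs
      by_cases hws : w s = 0
      · simp [hws]
      · rw [hsuppm s hs hws]
    rw [this, ← Finset.sum_mul, hw1, one_mul]
  -- conclusion
  intro z hz
  have hz' : z ∈ convexHull ℝ (S : Set (EuclideanSpace ℝ (Fin n))) := hP ▸ hz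
  rw [Finset.convexHull_eq] at hz'
  obtain ⟨u, hu0, hu1, huc⟩ := hz'
  have hzinner : ⟪c, z⟫ = ∑ s ∈ S, u s * f s := by
    rw [← huc]; exact inner_centerMass S c u hu1
  have : m ≤ ⟪c, z⟫ := by
    rw [hzinner]
    calc m = ∑ s ∈ S, u s * m := by rw [← Finset.sum_mul, hu1, one_mul]
      _ ≤ ∑ s ∈ S, u s * f s := by
        apply Finset.sum_le_sum
        intro s hs
        exact mul_le_mul_of_nonneg_left (hmle s hs) (hu0 s hs)
  have hfv : ⟪c, v⟫ = m := hvm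
  linarith
end
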